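/- arXiv:2103.04196 — 2 statements merged into one kernel-verified Lean document; each statement's English description precedes it below -/
import Mathlib

section
/- Let m, n ≥ 1, let 0 ≤ k < j ≤ min(m,n) with k ≥ 1, let (p̃,q̃) ∈ 𝒫ᵏ_{m,n} and (p̂,q̂) ∈ 𝒫ʲ_{m,n}, and set δ = ‖(p̃−p̂, q̃−q̂)‖. Then there exists a two-dimensional subspace W of V_k such that ‖S_k(p̃,q̃)x‖ ≤ δ·√(max(m,n) − k + 1)·‖x‖ for every x ∈ W; equivalently, the second smallest singular value of S_k(p̃,q̃) is at most δ·√(max(m,n) − k + 1). -/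
open Polynomial

/-- The squared ℓ²-norm of the coefficient sequence of a polynomial. -/
noncomputable def pnormSq (p : ℂ[X]) : ℝ := ∑ i ∈ p.support, ‖p.coeff i‖ ^ 2

/-- The ℓ²-norm of the coefficient sequence of a polynomial. -/
noncomputable def pnorm (p : ℂ[X]) : ℝ := Real.sqrt (pnormSq p)

/-- The ℓ²-norm of a pair of polynomials. -/
noncomputable def pairNorm (p q : ℂ[X]) : ℝ := Real.sqrt (pnormSq p + pnormSq q)

/-- The ℓ²-norm of a triple of polynomials. -/
noncomputable def tripleNorm (p q r : ℂ[X]) : ℝ :=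
  Real.sqrt (pnormSq p + pnormSq q + pnormSq r)

/-- The degree of the greatest common divisor of two polynomials. -/
noncomputable def gcdDeg (p q : ℂ[X]) : ℕ := (EuclideanDomain.gcd p q).natDegree

/-- The set 𝒞_{m,n} of pairs of polynomials of degrees exactly m and n. -/
def Cmn (m n : ℕ) : Set (ℂ[X] × ℂ[X]) :=
  {pq | pq.1.degree = (m : WithBot ℕ) ∧ pq.2.degree = (n : WithBot ℕ)}

/-- The GCD manifold 𝒫ᵏ_{m,n} : pairs in 𝒞_{m,n} whose GCD has degree k. -/
def Pmnk (m n k : ℕ) : Set (ℂ[X] × ℂ[X]) :=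
  {pq | pq ∈ Cmn m n ∧ gcdDeg pq.1 pq.2 = k}

/-- The distance θ_k(p,q) from (p,q) to the GCD manifold 𝒫ᵏ_{m,n}. -/
noncomputable def theta (m n k : ℕ) (p q : ℂ[X]) : ℝ :=
  sInf ((fun rs => pairNorm (p - rs.1) (q - rs.2)) '' Pmnk m n k)

/-- The bilinear Sylvester expression (w,v) ↦ p·w − q·v as a linear map. -/
noncomputable def sylMap (p q : ℂ[X]) : ℂ[X] × ℂ[X] →ₗ[ℂ] ℂ[X] :=
  (LinearMap.mulLeft ℂ p).comp (LinearMap.fst ℂ ℂ[X] ℂ[X]) -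
    (LinearMap.mulLeft ℂ q).comp (LinearMap.snd ℂ ℂ[X] ℂ[X])

/-- The domain V_j = {(w,v) : deg w ≤ n−j, deg v ≤ m−j} of the j-th Sylvester map. -/
noncomputable def Vspace (m n j : ℕ) : Submodule ℂ (ℂ[X] × ℂ[X]) :=
  (Polynomial.degreeLE ℂ ((n - j : ℕ) : WithBot ℕ)).prod
    (Polynomial.degreeLE ℂ ((m - j : ℕ) : WithBot ℕ))

lemma pnormSq_nonneg (p : ℂ[X]) : 0 ≤ pnormSq p :=
  Finset.sum_nonneg fun i _ => by positivity

lemma pnorm_nonneg (p : ℂ[X]) : 0 ≤ pnorm p := Real.sqrt_nonneg _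

lemma pnormSq_eq_sum_range (p : ℂ[X]) {N : ℕ} (h : p.natDegree < N) :
    pnormSq p = ∑ i ∈ Finset.range N, ‖p.coeff i‖ ^ 2 :=
  Finset.sum_subset (Polynomial.supp_subset_range h)
    (fun i _ hi => by rw [Polynomial.notMem_support_iff.mp hi]; simp)

noncomputable def coeffVec (N : ℕ) (p : ℂ[X]) : EuclideanSpace ℂ (Fin N) :=
  WithLp.toLp 2 (fun i => p.coeff i)

lemma pnorm_eq_norm_coeffVec {p : ℂ[X]} {N : ℕ} (h : p.natDegree < N) :
    pnorm p = ‖coeffVec N p‖ := by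
  rw [pnorm, EuclideanSpace.norm_eq, pnormSq_eq_sum_range p h,
    ← Fin.sum_univ_eq_sum_range]
  rfl

lemma pnorm_zero : pnorm 0 = 0 := by simp [pnorm, pnormSq]

lemma pnorm_add_le (a b : ℂ[X]) : pnorm (a + b) ≤ pnorm a + pnorm b := by
  set N := max (max a.natDegree b.natDegree) (a + b).natDegree + 1 with hN
  have ha : a.natDegree < N := by omega
  have hb : b.natDegree < N := by omega
  have hab : (a + b).natDegree < N := by omega
  rw [pnorm_eq_norm_coeffVec ha, pnorm_eq_norm_coeffVec hb, pnorm_eq_norm_coeffVec hab]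
  have : coeffVec N (a + b) = coeffVec N a + coeffVec N b := by
    ext i; simp [coeffVec]
  rw [this]
  exact norm_add_le _ _

lemma pnormSq_neg (a : ℂ[X]) : pnormSq (-a) = pnormSq a := by
  simp [pnormSq]

lemma pnorm_neg (a : ℂ[X]) : pnorm (-a) = pnorm a := by rw [pnorm, pnormSq_neg, pnorm]

lemma pnorm_sub_le (a b : ℂ[X]) : pnorm (a - b) ≤ pnorm a + pnorm b := by
  rw [sub_eq_add_neg]
  exact (pnorm_add_le a (-b)).trans (by rw [pnorm_neg])

lemma pnorm_sum_le {ι : Type*} (s : Finset ι) (f : ι → ℂ[X]) :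
    pnorm (∑ i ∈ s, f i) ≤ ∑ i ∈ s, pnorm (f i) := by
  classical
  induction s using Finset.induction with
  | empty => simp [pnorm_zero]
  | insert _ _ h ih =>
    rw [Finset.sum_insert h, Finset.sum_insert h]
    exact (pnorm_add_le _ _).trans (by linarith)

lemma pnormSq_C_mul (c : ℂ) (p : ℂ[X]) : pnormSq (C c * p) = ‖c‖ ^ 2 * pnormSq p := by
  have h1 : (C c * p).natDegree < p.natDegree + 1 :=
    Nat.lt_succ_of_le (natDegree_C_mul_le c p)
  rw [pnormSq_eq_sum_range _ h1, pnormSq_eq_sum_range p (Nat.lt_succ_self _),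
    Finset.mul_sum]
  refine Finset.sum_congr rfl fun i _ => ?_
  rw [coeff_C_mul, norm_mul, mul_pow]

lemma pnorm_C_mul (c : ℂ) (p : ℂ[X]) : pnorm (C c * p) = ‖c‖ * pnorm p := by
  rw [pnorm, pnormSq_C_mul, Real.sqrt_mul (by positivity), Real.sqrt_sq (norm_nonneg c), pnorm]

lemma pnormSq_mul_X_pow (p : ℂ[X]) (i : ℕ) : pnormSq (p * X ^ i) = pnormSq p := by
  have h1 : (p * X ^ i).natDegree < i + (p.natDegree + 1) := by
    have hmu := natDegree_mul_le (p := p) (q := X ^ i)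
    have h2 : (X ^ i : ℂ[X]).natDegree ≤ i := natDegree_X_pow_le i
    omega
  rw [pnormSq_eq_sum_range _ h1, pnormSq_eq_sum_range p (Nat.lt_succ_self _)]
  have key : ∀ d, ‖(p * X ^ i).coeff d‖ ^ 2
      = if i ≤ d then ‖p.coeff (d - i)‖ ^ 2 else 0 := by
    intro d
    rw [coeff_mul_X_pow']
    split <;> simp
  calc ∑ d ∈ Finset.range (i + (p.natDegree + 1)), ‖(p * X ^ i).coeff d‖ ^ 2
      = ∑ d ∈ Finset.Ico i (i + (p.natDegree + 1)), ‖(p * X ^ i).coeff d‖ ^ 2 := by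
        rw [Finset.range_eq_Ico, ← Finset.sum_Ico_consecutive _ (Nat.zero_le i) (by omega)]
        have : ∑ d ∈ Finset.Ico 0 i, ‖(p * X ^ i).coeff d‖ ^ 2 = 0 := by
          apply Finset.sum_eq_zero
          intro d hd
          rw [key d, if_neg]
          simp only [Finset.mem_Ico] at hd
          omega
        rw [this, zero_add]
    _ = ∑ d ∈ Finset.range (p.natDegree + 1), ‖(p * X ^ i).coeff (i + d)‖ ^ 2 := by
        rw [Finset.sum_Ico_eq_sum_range]
        simp
    _ = ∑ d ∈ Finset.range (p.natDegree + 1), ‖p.coeff d‖ ^ 2 := by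
        refine Finset.sum_congr rfl fun d _ => ?_
        rw [key (i + d), if_pos (Nat.le_add_right i d), Nat.add_sub_cancel_left]

noncomputable def l1 (p : ℂ[X]) : ℝ := ∑ i ∈ p.support, ‖p.coeff i‖

lemma l1_nonneg (p : ℂ[X]) : 0 ≤ l1 p := Finset.sum_nonneg fun i _ => norm_nonneg _

lemma pnorm_mul_le (p w : ℂ[X]) : pnorm (p * w) ≤ pnorm p * l1 w := by
  have hw : p * w = ∑ i ∈ w.support, C (w.coeff i) * (p * X ^ i) := by
    conv_lhs => rw [w.as_sum_support]
    rw [Finset.mul_sum]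
    refine Finset.sum_congr rfl fun i _ => ?_
    rw [← C_mul_X_pow_eq_monomial]
    ring
  rw [hw]
  calc pnorm (∑ i ∈ w.support, C (w.coeff i) * (p * X ^ i))
      ≤ ∑ i ∈ w.support, pnorm (C (w.coeff i) * (p * X ^ i)) := pnorm_sum_le _ _
    _ = ∑ i ∈ w.support, ‖w.coeff i‖ * pnorm p := by
        refine Finset.sum_congr rfl fun i _ => ?_
        rw [pnorm_C_mul, pnorm, pnormSq_mul_X_pow, ← pnorm]
    _ = pnorm p * l1 w := by rw [l1, ← Finset.sum_mul]; ring

lemma l1_sq_le (w : ℂ[X]) {D : ℕ} (hD : w.natDegree ≤ D) :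
    l1 w ^ 2 ≤ (D + 1) * pnormSq w := by
  calc l1 w ^ 2 ≤ (w.support.card : ℝ) * ∑ i ∈ w.support, ‖w.coeff i‖ ^ 2 :=
        sq_sum_le_card_mul_sum_sq
    _ ≤ (D + 1) * pnormSq w := by
        apply mul_le_mul_of_nonneg_right _ (pnormSq_nonneg w)
        have h1 : w.support.card ≤ w.natDegree + 1 :=
          (Finset.card_le_card w.supp_subset_range_natDegree_succ).trans
            (by rw [Finset.card_range])
        have : (w.support.card : ℝ) ≤ (D : ℝ) + 1 := by exact_mod_cast by omega
        linarith

lemma cs2 {a b c d : ℝ} (ha : 0 ≤ a) (hb : 0 ≤ b) (hc : 0 ≤ c) (hd : 0 ≤ d) :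
    a * c + b * d ≤ Real.sqrt (a ^ 2 + b ^ 2) * Real.sqrt (c ^ 2 + d ^ 2) := by
  have h : (a * c + b * d) ^ 2 ≤ (a ^ 2 + b ^ 2) * (c ^ 2 + d ^ 2) := by
    nlinarith [sq_nonneg (a * d - b * c)]
  have := Real.sqrt_le_sqrt h
  rwa [Real.sqrt_sq (by positivity), Real.sqrt_mul (by positivity)] at this

lemma key_bound (d1 d2 w v : ℂ[X]) (D : ℕ) (hw : w.natDegree ≤ D) (hv : v.natDegree ≤ D) :
    pnorm (d1 * w - d2 * v) ≤ pairNorm d1 d2 * Real.sqrt ((D : ℝ) + 1) * pairNorm w v := by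
  have h1 : pnorm (d1 * w - d2 * v) ≤ pnorm d1 * l1 w + pnorm d2 * l1 v :=
    (pnorm_sub_le _ _).trans (add_le_add (pnorm_mul_le _ _) (pnorm_mul_le _ _))
  have h2 : pnorm d1 * l1 w + pnorm d2 * l1 v ≤
      Real.sqrt (pnorm d1 ^ 2 + pnorm d2 ^ 2) * Real.sqrt (l1 w ^ 2 + l1 v ^ 2) :=
    cs2 (pnorm_nonneg _) (pnorm_nonneg _) (l1_nonneg _) (l1_nonneg _)
  have hsq1 : pnorm d1 ^ 2 = pnormSq d1 := Real.sq_sqrt (pnormSq_nonneg _)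
  have hsq2 : pnorm d2 ^ 2 = pnormSq d2 := Real.sq_sqrt (pnormSq_nonneg _)
  have h3 : l1 w ^ 2 + l1 v ^ 2 ≤ ((D : ℝ) + 1) * (pnormSq w + pnormSq v) := by
    have := l1_sq_le w hw
    have := l1_sq_le v hv
    have := pnormSq_nonneg w
    have := pnormSq_nonneg v
    nlinarith
  have h4 : Real.sqrt (l1 w ^ 2 + l1 v ^ 2) ≤
      Real.sqrt ((D : ℝ) + 1) * pairNorm w v := by
    rw [pairNorm, ← Real.sqrt_mul (by positivity)]
    exact Real.sqrt_le_sqrt h3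
  calc pnorm (d1 * w - d2 * v)
      ≤ Real.sqrt (pnorm d1 ^ 2 + pnorm d2 ^ 2) * Real.sqrt (l1 w ^ 2 + l1 v ^ 2) :=
        h1.trans h2
    _ ≤ Real.sqrt (pnorm d1 ^ 2 + pnorm d2 ^ 2) * (Real.sqrt ((D : ℝ) + 1) * pairNorm w v) :=
        mul_le_mul_of_nonneg_left h4 (Real.sqrt_nonneg _)
    _ = pairNorm d1 d2 * Real.sqrt ((D : ℝ) + 1) * pairNorm w v := by
        unfold pairNorm
        rw [hsq1, hsq2]; ring

/-- If (p̃,q̃) ∈ 𝒫ᵏ_{m,n} is at distance δ from a pair (p̂,q̂) ∈ 𝒫ʲ_{m,n} with j > k,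
then the second smallest singular value of S_k(p̃,q̃) is at most δ·√(max(m,n)−k+1):
there is a two-dimensional subspace of V_k on which S_k(p̃,q̃) is that small. -/
theorem second_singular_value_bound (m n j k : ℕ) (hm : 1 ≤ m) (hn : 1 ≤ n)
    (hk1 : 1 ≤ k) (hkj : k < j) (hj : j ≤ min m n)
    (pt qt : ℂ[X]) (hpt : (pt, qt) ∈ Pmnk m n k)
    (ph qh : ℂ[X]) (hph : (ph, qh) ∈ Pmnk m n j)
    (δ : ℝ) (hδ : δ = pairNorm (pt - ph) (qt - qh)) :
    ∃ W : Submodule ℂ (ℂ[X] × ℂ[X]), W ≤ Vspace m n k ∧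
      Module.finrank ℂ ↥W = 2 ∧
      ∀ x ∈ W, pnorm (pt * x.1 - qt * x.2) ≤
        δ * Real.sqrt ((max m n - k + 1 : ℕ)) * pairNorm x.1 x.2 := by
  obtain ⟨⟨hdph, hdqh⟩, hgj⟩ := hph
  simp only at hdph hdqh hgj
  have hm' : j ≤ m := le_trans hj (min_le_left m n)
  have hn' : j ≤ n := le_trans hj (min_le_right m n)
  have hphne : ph ≠ 0 := by
    intro h; rw [h, degree_zero] at hdph; exact absurd hdph (by simp)
  have hqhne : qh ≠ 0 := by
    intro h; rw [h, degree_zero] at hdqh; exact absurd hdqh (by simp)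
  have hgne : EuclideanDomain.gcd ph qh ≠ 0 := by
    intro h
    exact hphne (EuclideanDomain.gcd_eq_zero_iff.mp h).1
  obtain ⟨p1, hp1⟩ : EuclideanDomain.gcd ph qh ∣ ph := EuclideanDomain.gcd_dvd_left ph qh
  obtain ⟨q1, hq1⟩ : EuclideanDomain.gcd ph qh ∣ qh := EuclideanDomain.gcd_dvd_right ph qh
  have hp1ne : p1 ≠ 0 := by intro h; rw [h, mul_zero] at hp1; exact hphne hp1
  have hq1ne : q1 ≠ 0 := by intro h; rw [h, mul_zero] at hq1; exact hqhne hq1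
  have hgdeg : (EuclideanDomain.gcd ph qh).natDegree = j := hgj
  have hnph : ph.natDegree = m := natDegree_eq_of_degree_eq_some hdph
  have hnqh : qh.natDegree = n := natDegree_eq_of_degree_eq_some hdqh
  have hp1d : j + p1.natDegree = m := by
    rw [← hnph, hp1, natDegree_mul hgne hp1ne, hgdeg]
  have hq1d : j + q1.natDegree = n := by
    rw [← hnqh, hq1, natDegree_mul hgne hq1ne, hgdeg]
  set v1 : ℂ[X] × ℂ[X] := (q1, p1) with hv1
  set v2 : ℂ[X] × ℂ[X] := (X * q1, X * p1) with hv2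
  refine ⟨Submodule.span ℂ {v1, v2}, ?_, ?_, ?_⟩
  · -- W ≤ Vspace m n k
    rw [Submodule.span_le]
    have hdeg : ∀ (r : ℂ[X]) (d : ℕ), r.natDegree ≤ d → r ∈ Polynomial.degreeLE ℂ (d : WithBot ℕ) := by
      intro r d h
      rw [Polynomial.mem_degreeLE]
      exact degree_le_natDegree.trans (by exact_mod_cast h)
    have hx1 : (X * q1).natDegree ≤ 1 + q1.natDegree := by
      have := natDegree_mul_le (p := (X : ℂ[X])) (q := q1)
      have hX : (X : ℂ[X]).natDegree ≤ 1 := natDegree_X_le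
      omega
    have hx2 : (X * p1).natDegree ≤ 1 + p1.natDegree := by
      have := natDegree_mul_le (p := (X : ℂ[X])) (q := p1)
      have hX : (X : ℂ[X]).natDegree ≤ 1 := natDegree_X_le
      omega
    rintro z hz
    rcases hz with rfl | hz
    · exact Submodule.mem_prod.mpr
        ⟨hdeg q1 (n - k) (by omega), hdeg p1 (m - k) (by omega)⟩
    · rcases hz with rfl
      exact Submodule.mem_prod.mpr
        ⟨hdeg (X * q1) (n - k) (by omega), hdeg (X * p1) (m - k) (by omega)⟩
  · -- finrank = 2
    have hli : LinearIndependent ℂ ![v1, v2] := by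
      rw [LinearIndependent.pair_iff]
      intro s t hst
      have h1 : s • q1 + t • (X * q1) = 0 := congrArg Prod.fst hst
      rw [smul_eq_C_mul, smul_eq_C_mul] at h1
      have h2 : (C s + C t * X) * q1 = 0 := by linear_combination h1
      have h3 : C s + C t * X = 0 := by
        rcases mul_eq_zero.mp h2 with h | h
        · exact h
        · exact absurd h hq1ne
      constructor
      · have := congrArg (fun r => Polynomial.coeff r 0) h3
        simpa using this
      · have := congrArg (fun r => Polynomial.coeff r 1) h3
        simpa using this
    have hrange : Set.range ![v1, v2] = {v1, v2} := by
      ext x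
      constructor
      · rintro ⟨i, rfl⟩
        fin_cases i
        · exact Set.mem_insert _ _
        · exact Set.mem_insert_iff.mpr (Or.inr rfl)
      · rintro (rfl | rfl)
        · exact ⟨0, rfl⟩
        · exact ⟨1, rfl⟩
    rw [← hrange]
    rw [finrank_span_eq_card hli]
    simp
  · -- the bound
    intro x hx
    rw [Submodule.mem_span_pair] at hx
    obtain ⟨a, b, hab⟩ := hx
    set u : ℂ[X] := C a + C b * X with hu
    have hx1 : x.1 = u * q1 := by
      rw [← hab]
      show a • q1 + b • (X * q1) = u * q1
      rw [smul_eq_C_mul, smul_eq_C_mul, hu]; ring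
    have hx2 : x.2 = u * p1 := by
      rw [← hab]
      show a • p1 + b • (X * p1) = u * p1
      rw [smul_eq_C_mul, smul_eq_C_mul, hu]; ring
    have hrw : pt * x.1 - qt * x.2 = (pt - ph) * (u * q1) - (qt - qh) * (u * p1) := by
      rw [hx1, hx2]; linear_combination (u * q1) * hp1 - (u * p1) * hq1
    have hud : u.natDegree ≤ 1 := by
      apply le_trans (natDegree_add_le _ _)
      have h1 : (C a : ℂ[X]).natDegree = 0 := natDegree_C a
      have h2 : (C b * X : ℂ[X]).natDegree ≤ 1 :=
        le_trans (natDegree_C_mul_le b X) natDegree_X_le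
      omega
    have hmaxn : n ≤ max m n := le_max_right m n
    have hmaxm : m ≤ max m n := le_max_left m n
    have hdw : (u * q1).natDegree ≤ max m n - k := by
      have := natDegree_mul_le (p := u) (q := q1)
      omega
    have hdv : (u * p1).natDegree ≤ max m n - k := by
      have := natDegree_mul_le (p := u) (q := p1)
      omega
    have hcast : ((max m n - k + 1 : ℕ) : ℝ) = ((max m n - k : ℕ) : ℝ) + 1 := by
      push_cast; ring
    rw [hrw, hδ, hx1, hx2, hcast]
    exact key_bound (pt - ph) (qt - qh) (u * q1) (u * p1) (max m n - k) hdw hdv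
end

section
/- Let m, n ≥ 1, 0 ≤ k ≤ min(m,n), and let (p,q) ∈ 𝒫ᵏ_{m,n} (so deg gcd(p,q) = k). Then for every j with 0 ≤ j ≤ min(m,n) the distances satisfy the chain 0 = θ₀(p,q) = θ₁(p,q) = ⋯ = θ_k(p,q), θ_j(p,q) ≤ θ_{j+1}(p,q) for all j < min(m,n), and, if k < min(m,n), θ_k(p,q) < θ_{k+1}(p,q) (strict inequality). -/
open Polynomial

lemma pnormSq_eq_range (p : ℂ[X]) (N : ℕ) (h : p.natDegree < N) :
    pnormSq p = ∑ i ∈ Finset.range N, ‖p.coeff i‖ ^ 2 := by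
  refine Finset.sum_subset ?_ ?_
  · intro i hi
    exact Finset.mem_range.2 (lt_of_le_of_lt (le_natDegree_of_mem_supp i hi) h)
  · intro i _ hi
    simp [notMem_support_iff.1 hi]

lemma pairNorm_nonneg (p q : ℂ[X]) : 0 ≤ pairNorm p q := Real.sqrt_nonneg _

lemma pnormSq_zero : pnormSq 0 = 0 := by simp [pnormSq]

lemma pairNorm_zero : pairNorm 0 0 = 0 := by simp [pairNorm, pnormSq_zero]

/-- coefficient embedding into Euclidean space -/
noncomputable def toE (N : ℕ) (p : ℂ[X]) : EuclideanSpace ℂ (Fin N) := WithLp.toLp 2 (fun i => p.coeff i)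

noncomputable def toE2 (N : ℕ) (p q : ℂ[X]) : EuclideanSpace ℂ (Fin N ⊕ Fin N) :=
  WithLp.toLp 2 (Sum.elim (fun i => p.coeff i) (fun i => q.coeff i))

lemma pnorm_eq_toE (N : ℕ) (p : ℂ[X]) (h : p.natDegree < N) : pnorm p = ‖toE N p‖ := by
  rw [EuclideanSpace.norm_eq, pnorm, pnormSq_eq_range p N h]
  congr 1
  rw [← Fin.sum_univ_eq_sum_range (fun i => ‖p.coeff i‖ ^ 2) N]
  rfl

lemma pairNorm_eq_toE2 (N : ℕ) (p q : ℂ[X]) (hp : p.natDegree < N) (hq : q.natDegree < N) :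
    pairNorm p q = ‖toE2 N p q‖ := by
  rw [EuclideanSpace.norm_eq, pairNorm, pnormSq_eq_range p N hp, pnormSq_eq_range q N hq]
  congr 1
  rw [Fintype.sum_sum_type]
  congr 1
  · rw [← Fin.sum_univ_eq_sum_range (fun i => ‖p.coeff i‖ ^ 2) N]; rfl
  · rw [← Fin.sum_univ_eq_sum_range (fun i => ‖q.coeff i‖ ^ 2) N]; rfl

lemma toE2_sub (N : ℕ) (p q r s : ℂ[X]) :
    toE2 N (p - r) (q - s) = toE2 N p q - toE2 N r s := by
  ext i
  cases i <;> simp [toE2]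

/-- triangle inequality -/
lemma pairNorm_triangle (a b c d : ℂ[X]) :
    pairNorm (a + c) (b + d) ≤ pairNorm a b + pairNorm c d := by
  set N := (a.natDegree ⊔ c.natDegree) ⊔ (b.natDegree ⊔ d.natDegree) + 1 with hN
  have h1 : a.natDegree < N := by omega
  have h2 : b.natDegree < N := by omega
  have h3 : c.natDegree < N := by omega
  have h4 : d.natDegree < N := by omega
  have h5 : (a + c).natDegree < N :=
    lt_of_le_of_lt (natDegree_add_le _ _) (by omega)
  have h6 : (b + d).natDegree < N :=
    lt_of_le_of_lt (natDegree_add_le _ _) (by omega)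
  rw [pairNorm_eq_toE2 N _ _ h5 h6, pairNorm_eq_toE2 N _ _ h1 h2, pairNorm_eq_toE2 N _ _ h3 h4]
  have : toE2 N (a + c) (b + d) = toE2 N a b + toE2 N c d := by
    ext i; cases i <;> simp [toE2]
  rw [this]
  exact norm_add_le _ _

lemma pnorm_smul (c : ℂ) (p : ℂ[X]) : pnorm (c • p) = ‖c‖ * pnorm p := by
  have h : (c • p).natDegree < p.natDegree + 1 :=
    lt_of_le_of_lt (natDegree_smul_le c p) (by omega)
  rw [pnorm, pnorm, pnormSq_eq_range _ (p.natDegree + 1) h,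
    pnormSq_eq_range p (p.natDegree + 1) (by omega)]
  rw [← Real.sqrt_sq (norm_nonneg c), ← Real.sqrt_mul (sq_nonneg _)]
  congr 1
  rw [Finset.mul_sum]
  refine Finset.sum_congr rfl fun i _ => ?_
  simp [mul_pow, norm_mul]

lemma pairNorm_smul (c : ℂ) (p q : ℂ[X]) :
    pairNorm (c • p) (c • q) = ‖c‖ * pairNorm p q := by
  set N := p.natDegree ⊔ q.natDegree + 1 with hN
  have h1 : (c • p).natDegree < N := lt_of_le_of_lt (natDegree_smul_le c p) (by omega)
  have h2 : (c • q).natDegree < N := lt_of_le_of_lt (natDegree_smul_le c q) (by omega)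
  rw [pairNorm_eq_toE2 N _ _ h1 h2, pairNorm_eq_toE2 N p q (by omega) (by omega)]
  have : toE2 N (c • p) (c • q) = c • toE2 N p q := by
    ext i; cases i <;> simp [toE2]
  rw [this, norm_smul]

lemma coeff_le_pnorm (p : ℂ[X]) (i : ℕ) : ‖p.coeff i‖ ≤ pnorm p := by
  rcases em (i ∈ p.support) with h | h
  · have : ‖p.coeff i‖ ^ 2 ≤ pnormSq p :=
      Finset.single_le_sum (fun j _ => sq_nonneg ‖p.coeff j‖) h
    calc ‖p.coeff i‖ = Real.sqrt (‖p.coeff i‖ ^ 2) := (Real.sqrt_sq (norm_nonneg _)).symm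
      _ ≤ pnorm p := Real.sqrt_le_sqrt this
  · rw [notMem_support_iff.1 h, norm_zero]
    exact Real.sqrt_nonneg _

lemma pnorm_le_pairNorm_left (p q : ℂ[X]) : pnorm p ≤ pairNorm p q :=
  Real.sqrt_le_sqrt (by simpa using pnormSq_nonneg q)

lemma pnorm_le_pairNorm_right (p q : ℂ[X]) : pnorm q ≤ pairNorm p q :=
  Real.sqrt_le_sqrt (by simpa using pnormSq_nonneg p)

/-- crude multiplicative bound -/
lemma pnorm_mul_le_s19 (a b : ℂ[X]) (N : ℕ) (h : (a * b).natDegree < N) :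
    pnorm (a * b) ≤ (N : ℝ) ^ 2 * (pnorm a * pnorm b) := by
  have hcoeff : ∀ j : ℕ, j < N → ‖(a * b).coeff j‖ ≤ (N : ℝ) * (pnorm a * pnorm b) := by
    intro j hj
    rw [coeff_mul]
    calc ‖∑ x ∈ Finset.HasAntidiagonal.antidiagonal j, a.coeff x.1 * b.coeff x.2‖
        ≤ ∑ x ∈ Finset.HasAntidiagonal.antidiagonal j, ‖a.coeff x.1 * b.coeff x.2‖ := norm_sum_le _ _
      _ ≤ ∑ _x ∈ Finset.HasAntidiagonal.antidiagonal j, pnorm a * pnorm b := by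
          refine Finset.sum_le_sum fun x _ => ?_
          rw [norm_mul]
          exact mul_le_mul (coeff_le_pnorm a x.1) (coeff_le_pnorm b x.2) (norm_nonneg _)
            (pnorm_nonneg a)
      _ = ((j + 1 : ℕ) : ℝ) * (pnorm a * pnorm b) := by
          rw [Finset.sum_const, Finset.Nat.card_antidiagonal]; push_cast; ring
      _ ≤ (N : ℝ) * (pnorm a * pnorm b) := by
          have hj' : ((j + 1 : ℕ) : ℝ) ≤ (N : ℝ) := by exact_mod_cast hj
          exact mul_le_mul_of_nonneg_right hj'
            (mul_nonneg (pnorm_nonneg a) (pnorm_nonneg b))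
  have key : pnormSq (a * b) ≤ (N : ℝ) * ((N : ℝ) * (pnorm a * pnorm b)) ^ 2 := by
    rw [pnormSq_eq_range _ N h]
    calc ∑ i ∈ Finset.range N, ‖(a * b).coeff i‖ ^ 2
        ≤ ∑ _i ∈ Finset.range N, ((N : ℝ) * (pnorm a * pnorm b)) ^ 2 := by
          refine Finset.sum_le_sum fun i hi => ?_
          have := hcoeff i (Finset.mem_range.1 hi)
          exact pow_le_pow_left₀ (norm_nonneg _) this 2
      _ = (N : ℝ) * ((N : ℝ) * (pnorm a * pnorm b)) ^ 2 := by
          rw [Finset.sum_const, Finset.card_range]; ring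
  calc pnorm (a * b) = Real.sqrt (pnormSq (a * b)) := rfl
    _ ≤ Real.sqrt ((N : ℝ) * ((N : ℝ) * (pnorm a * pnorm b)) ^ 2) := Real.sqrt_le_sqrt key
    _ ≤ Real.sqrt (((N : ℝ) ^ 2 * (pnorm a * pnorm b)) ^ 2) := by
        refine Real.sqrt_le_sqrt ?_
        have h0 : (0:ℝ) ≤ (N : ℝ) := Nat.cast_nonneg _
        have h0' : (0:ℝ) ≤ pnorm a * pnorm b := mul_nonneg (pnorm_nonneg a) (pnorm_nonneg b)
        have h1 : (1:ℝ) ≤ (N : ℝ) := by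
          have : 1 ≤ N := by omega
          exact_mod_cast this
        have key2 : 0 ≤ (N:ℝ)^3 * (pnorm a * pnorm b)^2 * ((N:ℝ) - 1) :=
          mul_nonneg (mul_nonneg (pow_nonneg h0 3) (sq_nonneg _)) (by linarith)
        nlinarith [key2]
    _ = (N : ℝ) ^ 2 * (pnorm a * pnorm b) := Real.sqrt_sq
        (mul_nonneg (sq_nonneg _) (mul_nonneg (pnorm_nonneg a) (pnorm_nonneg b)))

open EuclideanDomain in
/-- gcd of g*a, g*b for coprime a b is associated to g -/
lemma gcd_mul_coprime (g a b : ℂ[X]) (hg : g ≠ 0) (hab : IsCoprime a b) :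
    Associated (EuclideanDomain.gcd (g * a) (g * b)) g := by
  refine associated_of_dvd_dvd ?_ ?_
  · obtain ⟨x, y, hxy⟩ := hab
    have hthis : g = y * (g * b) + x * (g * a) := by linear_combination (-g) * hxy
    have hdvd : EuclideanDomain.gcd (g * a) (g * b) ∣ y * (g * b) + x * (g * a) :=
      dvd_add ((EuclideanDomain.gcd_dvd_right _ _).mul_left y)
        ((EuclideanDomain.gcd_dvd_left _ _).mul_left x)
    rwa [← hthis] at hdvd
  · exact EuclideanDomain.dvd_gcd (dvd_mul_right g a) (dvd_mul_right g b)

lemma gcdDeg_mul_coprime (g a b : ℂ[X]) (hg : g ≠ 0) (hab : IsCoprime a b) :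
    gcdDeg (g * a) (g * b) = g.natDegree := by
  exact natDegree_eq_of_degree_eq (degree_eq_degree_of_associated (gcd_mul_coprime g a b hg hab))

/-- decomposition p = g * p₁, q = g * q₁ with coprime quotients -/
lemma gcd_decomp (p q : ℂ[X]) (hp : p ≠ 0) (hq : q ≠ 0) :
    ∃ p₁ q₁ : ℂ[X], p = EuclideanDomain.gcd p q * p₁ ∧ q = EuclideanDomain.gcd p q * q₁ ∧
      IsCoprime p₁ q₁ ∧ p₁ ≠ 0 ∧ q₁ ≠ 0 := by
  classical
  set g := EuclideanDomain.gcd p q with hgdef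
  have hg : g ≠ 0 := fun h => hp ((EuclideanDomain.gcd_eq_zero_iff.1 h).1)
  obtain ⟨p₁, hp₁⟩ := EuclideanDomain.gcd_dvd_left p q
  obtain ⟨q₁, hq₁⟩ := EuclideanDomain.gcd_dvd_right p q
  refine ⟨p₁, q₁, hp₁, hq₁, ?_, ?_, ?_⟩
  · rw [← EuclideanDomain.gcd_isUnit_iff]
    set d := EuclideanDomain.gcd p₁ q₁ with hddef
    have h1 : g * d ∣ p := by
      rw [hp₁]; exact mul_dvd_mul_left g (EuclideanDomain.gcd_dvd_left _ _)
    have h2 : g * d ∣ q := by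
      rw [hq₁]; exact mul_dvd_mul_left g (EuclideanDomain.gcd_dvd_right _ _)
    have h3 : g * d ∣ g * 1 := by
      rw [mul_one]; exact EuclideanDomain.dvd_gcd h1 h2
    exact isUnit_of_dvd_one ((mul_dvd_mul_iff_left hg).1 h3)
  · intro h0; rw [h0, mul_zero] at hp₁; exact hp hp₁
  · intro h0; rw [h0, mul_zero] at hq₁; exact hq hq₁

lemma isCoprime_of_no_common_root (a b : ℂ[X]) (ha : a ≠ 0)
    (h : ∀ z : ℂ, a.eval z = 0 → b.eval z ≠ 0) : IsCoprime a b := by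
  classical
  rw [← EuclideanDomain.gcd_isUnit_iff]
  by_contra hu
  have hd : EuclideanDomain.gcd a b ≠ 0 :=
    fun h0 => ha (EuclideanDomain.gcd_eq_zero_iff.1 h0).1
  have hpos : 0 < (EuclideanDomain.gcd a b).degree := degree_pos_of_ne_zero_of_nonunit hd hu
  obtain ⟨z, hz⟩ := Complex.exists_root hpos
  have hza : a.eval z = 0 :=
    eval_eq_zero_of_dvd_of_eval_eq_zero (EuclideanDomain.gcd_dvd_left a b) hz
  have hzb : b.eval z = 0 :=
    eval_eq_zero_of_dvd_of_eval_eq_zero (EuclideanDomain.gcd_dvd_right a b) hz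
  exact h z hza hzb

lemma no_common_root_of_isCoprime {a b : ℂ[X]} (h : IsCoprime a b) (z : ℂ)
    (hza : a.eval z = 0) : b.eval z ≠ 0 := by
  intro hzb
  obtain ⟨u, v, huv⟩ := h
  have := congrArg (Polynomial.eval z) huv
  simp [hza, hzb] at this

lemma pairNorm_le_add (p q : ℂ[X]) : pairNorm p q ≤ pnorm p + pnorm q := by
  have h : pnormSq p + pnormSq q ≤ (pnorm p + pnorm q) ^ 2 := by
    have hp := Real.sq_sqrt (pnormSq_nonneg p)
    have hq := Real.sq_sqrt (pnormSq_nonneg q)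
    have : (pnorm p + pnorm q) ^ 2 = pnormSq p + pnormSq q + 2 * (pnorm p * pnorm q) := by
      rw [add_sq]; rw [pnorm, pnorm] at *; nlinarith [hp, hq]
    nlinarith [mul_nonneg (pnorm_nonneg p) (pnorm_nonneg q)]
  calc pairNorm p q ≤ Real.sqrt ((pnorm p + pnorm q) ^ 2) := Real.sqrt_le_sqrt h
    _ = pnorm p + pnorm q := Real.sqrt_sq (add_nonneg (pnorm_nonneg p) (pnorm_nonneg q))

lemma exists_small_avoid (S : Set ℂ) (hS : S.Finite) (δ : ℝ) (hδ : 0 < δ) :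
    ∃ c : ℂ, ‖c‖ < δ ∧ c ∉ S := by
  have hT : {c : ℂ | ‖c‖ < δ}.Infinite := by
    refine Set.infinite_of_injective_forall_mem
      (f := fun k : ℕ => ((δ / (k + 2) : ℝ) : ℂ)) ?_ ?_
    · intro a b hab
      simp only [Complex.ofReal_inj] at hab
      have ha : ((a:ℝ) + 2) ≠ 0 := by positivity
      have hb : ((b:ℝ) + 2) ≠ 0 := by positivity
      rw [div_eq_div_iff ha hb] at hab
      have h2 := mul_left_cancel₀ (ne_of_gt hδ) hab
      have : (a : ℝ) = b := by linarith
      exact_mod_cast this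
    · intro k
      simp only [Set.mem_setOf_eq, Complex.norm_real, Real.norm_eq_abs]
      rw [abs_of_pos (by positivity), div_lt_iff₀ (by positivity)]
      nlinarith [hδ]
  obtain ⟨c, hc⟩ := (hT.diff hS).nonempty
  exact ⟨c, hc.1, hc.2⟩

/-- splitting the gcd into a degree-j part and a monic rest -/
lemma split_poly (g : ℂ[X]) (hg : g ≠ 0) (j : ℕ) (hj : j ≤ g.natDegree) :
    ∃ g₁ g₂ : ℂ[X], g = g₁ * g₂ ∧ g₁.natDegree = j ∧ g₂.Monic ∧
      g₂.natDegree = g.natDegree - j := by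
  have hsp : g.Splits := IsAlgClosed.splits g
  have hcard : g.roots.card = g.natDegree := (splits_iff_card_roots).1 hsp
  set t : Multiset ℂ := ((g.roots.toList.take j : List ℂ) : Multiset ℂ) with htdef
  have hle : t ≤ g.roots := by
    rw [htdef]
    calc ((g.roots.toList.take j : List ℂ) : Multiset ℂ) ≤ (g.roots.toList : Multiset ℂ) :=
      Multiset.coe_le.2 (List.take_sublist j g.roots.toList).subperm
    _ = g.roots := g.roots.coe_toList
  have htcard : Multiset.card t = j := by
    rw [htdef]
    simp only [Multiset.coe_card, List.length_take, Multiset.length_toList]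
    omega
  refine ⟨C g.leadingCoeff * (t.map fun a => X - C a).prod,
    ((g.roots - t).map fun a => X - C a).prod, ?_, ?_, ?_, ?_⟩
  · conv_lhs => rw [hsp.eq_prod_roots]
    rw [mul_assoc, ← Multiset.prod_add, ← Multiset.map_add]
    congr 2
    rw [add_comm, tsub_add_cancel_of_le hle]
  · rw [natDegree_C_mul (leadingCoeff_ne_zero.2 hg),
      natDegree_multiset_prod_X_sub_C_eq_card, htcard]
  · exact monic_multiset_prod_of_monic _ _ fun a _ => monic_X_sub_C a
  · rw [natDegree_multiset_prod_X_sub_C_eq_card, Multiset.card_sub hle, htcard, hcard]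

lemma ne_zero_of_degree_coe {p : ℂ[X]} {m : ℕ} (h : p.degree = (m : WithBot ℕ)) : p ≠ 0 := by
  intro h0
  rw [h0, degree_zero] at h
  exact (WithBot.bot_ne_coe (a := m)) h

lemma approx_lemma (m n K : ℕ) (r s : ℂ[X]) (hrs : (r, s) ∈ Pmnk m n K)
    (j : ℕ) (hj : j ≤ K) (ε : ℝ) (hε : 0 < ε) :
    ∃ r' s' : ℂ[X], (r', s') ∈ Pmnk m n j ∧ pairNorm (r - r') (s - s') < ε := by
  rcases eq_or_lt_of_le hj with rfl | hjK
  · exact ⟨r, s, hrs, by simpa [sub_self, pairNorm_zero] using hε⟩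
  obtain ⟨⟨hdr, hds⟩, hgcd⟩ := hrs
  simp only at hdr hds hgcd
  have hr0 : r ≠ 0 := ne_zero_of_degree_coe hdr
  have hs0 : s ≠ 0 := ne_zero_of_degree_coe hds
  set g := EuclideanDomain.gcd r s with hgdef
  have hg0 : g ≠ 0 := fun h => hr0 (EuclideanDomain.gcd_eq_zero_iff.1 h).1
  have hgdeg : g.natDegree = K := hgcd
  obtain ⟨r₁, s₁, hr₁, hs₁, hcop, hr₁0, hs₁0⟩ := gcd_decomp r s hr0 hs0
  rw [← hgdef] at hr₁ hs₁
  obtain ⟨g₁, g₂, hg12, hg₁deg, hg₂monic, hg₂deg⟩ := split_poly g hg0 j (hgdeg ▸ hj)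
  have hg₁0 : g₁ ≠ 0 := fun h => hg0 (by rw [hg12, h, zero_mul])
  have hg₂0 : g₂ ≠ 0 := hg₂monic.ne_zero
  have hg₂pos : 1 ≤ g₂.natDegree := by omega
  -- bad sets
  set B1 : Set ℂ := (fun z => -g₂.eval z) '' ↑s₁.roots.toFinset with hB1
  set B2 : Set ℂ := (fun z => -g₂.eval z) '' ↑r₁.roots.toFinset with hB2
  have hB1fin : B1.Finite := (s₁.roots.toFinset.finite_toSet).image _
  have hB2fin : B2.Finite := (r₁.roots.toFinset.finite_toSet).image _
  set M := pnorm (g₁ * r₁) + pnorm (g₁ * s₁) with hM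
  have hM0 : 0 ≤ M := add_nonneg (pnorm_nonneg _) (pnorm_nonneg _)
  set δ := ε / (M + 1) with hδdef
  have hδ : 0 < δ := div_pos hε (by linarith)
  obtain ⟨c, hcδ, hcB⟩ := exists_small_avoid B1 hB1fin δ hδ
  obtain ⟨c', hc'δ, hc'B⟩ := exists_small_avoid (B2 ∪ {c}) (hB2fin.union (Set.finite_singleton c)) δ hδ
  have hcc' : c ≠ c' := fun h => hc'B (Set.mem_union_right _ (h ▸ rfl))
  set A := (g₂ + C c) * r₁ with hA
  set B := (g₂ + C c') * s₁ with hB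
  have hdg₂c : (g₂ + C c).natDegree = g₂.natDegree := natDegree_add_C
  have hdg₂c' : (g₂ + C c').natDegree = g₂.natDegree := natDegree_add_C
  have hg₂c0 : g₂ + C c ≠ 0 := fun h => by
    rw [h] at hdg₂c; simp only [natDegree_zero] at hdg₂c; omega
  have hg₂c'0 : g₂ + C c' ≠ 0 := fun h => by
    rw [h] at hdg₂c'; simp only [natDegree_zero] at hdg₂c'; omega
  have hA0 : A ≠ 0 := mul_ne_zero hg₂c0 hr₁0
  have hB0 : B ≠ 0 := mul_ne_zero hg₂c'0 hs₁0
  -- coprimality of A and B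
  have hABcop : IsCoprime A B := by
    refine isCoprime_of_no_common_root A B hA0 ?_
    intro z hzA hzB
    rw [hA, eval_mul, mul_eq_zero] at hzA
    rw [hB, eval_mul, mul_eq_zero] at hzB
    simp only [eval_add, eval_C] at hzA hzB
    rcases hzA with h1 | h1 <;> rcases hzB with h2 | h2
    · exact hcc' (by linear_combination h1 - h2)
    · exact hcB ⟨z, by
        simp only [Multiset.mem_toFinset, Finset.coe_sort_coe, Set.mem_setOf_eq,
          Finset.mem_coe, mem_roots hs₁0]
        exact h2, by linear_combination -h1⟩
    · exact hc'B (Set.mem_union_left _ ⟨z, by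
        simp only [Multiset.mem_toFinset, Finset.mem_coe, mem_roots hr₁0]
        exact h1, by linear_combination -h2⟩)
    · exact no_common_root_of_isCoprime hcop z h1 h2
  -- the perturbed pair
  refine ⟨g₁ * A, g₁ * B, ⟨⟨?_, ?_⟩, ?_⟩, ?_⟩
  · -- degree of r' = m
    have hnd : (g₁ * A).natDegree = r.natDegree := by
      rw [hA, natDegree_mul hg₁0 hA0, natDegree_mul hg₂c0 hr₁0, hdg₂c]
      rw [hr₁, hg12, natDegree_mul (mul_ne_zero hg₁0 hg₂0) hr₁0,
        natDegree_mul hg₁0 hg₂0]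
      omega
    have hrm : r.natDegree = m := natDegree_eq_of_degree_eq_some hdr
    simp only
    rw [degree_eq_natDegree (mul_ne_zero hg₁0 hA0), hnd, hrm]
  · have hnd : (g₁ * B).natDegree = s.natDegree := by
      rw [hB, natDegree_mul hg₁0 hB0, natDegree_mul hg₂c'0 hs₁0, hdg₂c']
      rw [hs₁, hg12, natDegree_mul (mul_ne_zero hg₁0 hg₂0) hs₁0,
        natDegree_mul hg₁0 hg₂0]
      omega
    have hsn : s.natDegree = n := natDegree_eq_of_degree_eq_some hds
    simp only
    rw [degree_eq_natDegree (mul_ne_zero hg₁0 hB0), hnd, hsn]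
  · simpa only using (gcdDeg_mul_coprime g₁ A B hg₁0 hABcop).trans hg₁deg
  · -- distance estimate
    have hrdiff : r - g₁ * A = (-c) • (g₁ * r₁) := by
      rw [hr₁, hg12, hA, smul_eq_C_mul]
      ring_nf
      rw [C_neg]
      ring
    have hsdiff : s - g₁ * B = (-c') • (g₁ * s₁) := by
      rw [hs₁, hg12, hB, smul_eq_C_mul]
      ring_nf
      rw [C_neg]
      ring
    calc pairNorm (r - g₁ * A) (s - g₁ * B)
        ≤ pnorm (r - g₁ * A) + pnorm (s - g₁ * B) := pairNorm_le_add _ _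
      _ = ‖-c‖ * pnorm (g₁ * r₁) + ‖-c'‖ * pnorm (g₁ * s₁) := by
          rw [hrdiff, hsdiff, pnorm_smul, pnorm_smul]
      _ ≤ δ * pnorm (g₁ * r₁) + δ * pnorm (g₁ * s₁) := by
          rw [norm_neg, norm_neg]
          exact add_le_add (mul_le_mul_of_nonneg_right hcδ.le (pnorm_nonneg _))
            (mul_le_mul_of_nonneg_right hc'δ.le (pnorm_nonneg _))
      _ = δ * M := by rw [hM]; ring
      _ < δ * (M + 1) := by nlinarith [hδ]
      _ = ε := by rw [hδdef]; field_simp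

lemma theta_bddBelow (m n j : ℕ) (p q : ℂ[X]) :
    BddBelow ((fun rs => pairNorm (p - rs.1) (q - rs.2)) '' Pmnk m n j) :=
  ⟨0, fun y hy => by
    obtain ⟨rs, _, rfl⟩ := hy
    exact pairNorm_nonneg _ _⟩

lemma theta_nonneg (m n j : ℕ) (p q : ℂ[X]) : 0 ≤ theta m n j p q :=
  Real.sInf_nonneg fun y hy => by
    obtain ⟨rs, _, rfl⟩ := hy
    exact pairNorm_nonneg _ _

lemma theta_le (m n j : ℕ) (p q r s : ℂ[X]) (h : (r, s) ∈ Pmnk m n j) :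
    theta m n j p q ≤ pairNorm (p - r) (q - s) :=
  csInf_le (theta_bddBelow m n j p q) ⟨(r, s), h, rfl⟩

lemma theta_eq_zero_of_le (m n K j : ℕ) (p q : ℂ[X]) (hpq : (p, q) ∈ Pmnk m n K)
    (hj : j ≤ K) : theta m n j p q = 0 := by
  refine le_antisymm ?_ (theta_nonneg m n j p q)
  refine le_of_forall_pos_le_add fun ε hε => ?_
  obtain ⟨r', s', hmem, hclose⟩ := approx_lemma m n K p q hpq j hj ε hε
  calc theta m n j p q ≤ pairNorm (p - r') (q - s') := theta_le m n j p q r' s' hmem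
    _ ≤ 0 + ε := by linarith

lemma Pmnk_nonempty (m n j : ℕ) (hjm : j ≤ m) (hjn : j ≤ n) :
    ∃ r s : ℂ[X], (r, s) ∈ Pmnk m n j := by
  set A : ℂ[X] := (X - C 1) ^ (m - j) with hAdef
  set B : ℂ[X] := (X - C 2) ^ (n - j) with hBdef
  have hA0 : A ≠ 0 := pow_ne_zero _ (X_sub_C_ne_zero 1)
  have hB0 : B ≠ 0 := pow_ne_zero _ (X_sub_C_ne_zero 2)
  have hX0 : (X : ℂ[X]) ^ j ≠ 0 := pow_ne_zero _ X_ne_zero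
  have hcop : IsCoprime A B := by
    refine isCoprime_of_no_common_root A B hA0 ?_
    intro z hzA hzB
    rw [hAdef, eval_pow, eval_sub, eval_X, eval_C] at hzA
    rw [hBdef, eval_pow, eval_sub, eval_X, eval_C] at hzB
    have h1 : z = 1 := by
      rcases Nat.eq_zero_or_pos (m - j) with h | h
      · rw [h, pow_zero] at hzA; exact absurd hzA one_ne_zero
      · have := pow_eq_zero_iff (ne_of_gt h) |>.1 hzA
        linear_combination this
    have h2 : z = 2 := by
      rcases Nat.eq_zero_or_pos (n - j) with h | h
      · rw [h, pow_zero] at hzB; exact absurd hzB one_ne_zero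
      · have := pow_eq_zero_iff (ne_of_gt h) |>.1 hzB
        linear_combination this
    rw [h1] at h2
    norm_num at h2
  refine ⟨X ^ j * A, X ^ j * B, ⟨⟨?_, ?_⟩, ?_⟩⟩
  · simp only
    rw [degree_eq_natDegree (mul_ne_zero hX0 hA0), natDegree_mul hX0 hA0,
      natDegree_X_pow, hAdef, natDegree_pow, natDegree_X_sub_C]
    norm_cast
    omega
  · simp only
    rw [degree_eq_natDegree (mul_ne_zero hX0 hB0), natDegree_mul hX0 hB0,
      natDegree_X_pow, hBdef, natDegree_pow, natDegree_X_sub_C]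
    norm_cast
    omega
  · simp only
    rw [gcdDeg_mul_coprime _ _ _ hX0 hcop, natDegree_X_pow]

lemma theta_mono (m n k : ℕ) (p q : ℂ[X]) (j : ℕ) (hj : j < min m n) :
    theta m n j p q ≤ theta m n (j + 1) p q := by
  obtain ⟨r0, s0, hr0⟩ := Pmnk_nonempty m n (j + 1) (by omega) (by omega)
  refine le_csInf ⟨_, ⟨(r0, s0), hr0, rfl⟩⟩ ?_
  rintro b ⟨⟨r, s⟩, hrs, rfl⟩
  refine le_of_forall_pos_le_add fun ε hε => ?_
  obtain ⟨r', s', hmem, hclose⟩ := approx_lemma m n (j + 1) r s hrs j (by omega) ε hε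
  have htri : pairNorm (p - r') (q - s') ≤ pairNorm (p - r) (q - s) + pairNorm (r - r') (s - s') := by
    have e1 : p - r' = (p - r) + (r - r') := by ring
    have e2 : q - s' = (q - s) + (s - s') := by ring
    rw [e1, e2]
    exact pairNorm_triangle _ _ _ _
  calc theta m n j p q ≤ pairNorm (p - r') (q - s') := theta_le m n j p q r' s' hmem
    _ ≤ pairNorm (p - r) (q - s) + pairNorm (r - r') (s - s') := htri
    _ ≤ pairNorm (p - r) (q - s) + ε := by linarith

lemma gcdDeg_ge_aux (p q w v : ℂ[X]) (hp : p ≠ 0) (hq : q ≠ 0)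
    (heq : p * w = q * v) (hw : w ≠ 0) :
    q.natDegree - w.natDegree ≤ gcdDeg p q := by
  obtain ⟨p₁, q₁, hp₁, hq₁, hcop, hp₁0, hq₁0⟩ := gcd_decomp p q hp hq
  set g := EuclideanDomain.gcd p q with hgdef
  have hg0 : g ≠ 0 := fun h => hp (EuclideanDomain.gcd_eq_zero_iff.1 h).1
  have heq' : p₁ * w = q₁ * v := by
    have : g * (p₁ * w) = g * (q₁ * v) := by
      rw [← mul_assoc, ← mul_assoc, ← hp₁, ← hq₁]; exact heq
    exact mul_left_cancel₀ hg0 this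
  have hdvd : q₁ ∣ w := by
    have h1 : q₁ ∣ p₁ * w := ⟨v, heq'⟩
    exact (hcop.symm).dvd_of_dvd_mul_left h1
  have hdle : q₁.natDegree ≤ w.natDegree := natDegree_le_of_dvd hdvd hw
  have hqdeg : q.natDegree = g.natDegree + q₁.natDegree := by
    rw [hq₁, natDegree_mul hg0 hq₁0]
  have : gcdDeg p q = g.natDegree := rfl
  omega

lemma witness_of_gcdDeg (p q : ℂ[X]) (hp : p ≠ 0) (hq : q ≠ 0) :
    ∃ w v : ℂ[X], p * w = q * v ∧ w ≠ 0 ∧ v ≠ 0 ∧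
      w.natDegree = q.natDegree - gcdDeg p q ∧
      v.natDegree = p.natDegree - gcdDeg p q := by
  obtain ⟨p₁, q₁, hp₁, hq₁, hcop, hp₁0, hq₁0⟩ := gcd_decomp p q hp hq
  set g := EuclideanDomain.gcd p q with hgdef
  have hg0 : g ≠ 0 := fun h => hp (EuclideanDomain.gcd_eq_zero_iff.1 h).1
  have hqdeg : q.natDegree = g.natDegree + q₁.natDegree := by
    rw [hq₁, natDegree_mul hg0 hq₁0]
  have hpdeg : p.natDegree = g.natDegree + p₁.natDegree := by
    rw [hp₁, natDegree_mul hg0 hp₁0]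
  have hgd : gcdDeg p q = g.natDegree := rfl
  refine ⟨q₁, p₁, ?_, hq₁0, hp₁0, by omega, by omega⟩
  rw [hp₁, hq₁]; ring

section Sylvester

variable (a b : ℕ)

/-- polynomial from the first block of coordinates -/
noncomputable def wpoly (x : EuclideanSpace ℂ (Fin a ⊕ Fin b)) : ℂ[X] :=
  ∑ i : Fin a, C (x (Sum.inl i)) * X ^ (i : ℕ)

noncomputable def vpoly (x : EuclideanSpace ℂ (Fin a ⊕ Fin b)) : ℂ[X] :=
  ∑ i : Fin b, C (x (Sum.inr i)) * X ^ (i : ℕ)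

lemma wpoly_add (x y : EuclideanSpace ℂ (Fin a ⊕ Fin b)) :
    wpoly a b (x + y) = wpoly a b x + wpoly a b y := by
  simp only [wpoly, ← Finset.sum_add_distrib]
  refine Finset.sum_congr rfl fun i _ => ?_
  have : (x + y) (Sum.inl i) = x (Sum.inl i) + y (Sum.inl i) := rfl
  rw [this, C_add]; ring

lemma vpoly_add (x y : EuclideanSpace ℂ (Fin a ⊕ Fin b)) :
    vpoly a b (x + y) = vpoly a b x + vpoly a b y := by
  simp only [vpoly, ← Finset.sum_add_distrib]
  refine Finset.sum_congr rfl fun i _ => ?_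
  have : (x + y) (Sum.inr i) = x (Sum.inr i) + y (Sum.inr i) := rfl
  rw [this, C_add]; ring

lemma wpoly_smul (c : ℂ) (x : EuclideanSpace ℂ (Fin a ⊕ Fin b)) :
    wpoly a b (c • x) = c • wpoly a b x := by
  simp only [wpoly, Finset.smul_sum]
  refine Finset.sum_congr rfl fun i _ => ?_
  have : (c • x) (Sum.inl i) = c * x (Sum.inl i) := rfl
  rw [this, C_mul, smul_eq_C_mul]; ring

lemma vpoly_smul (c : ℂ) (x : EuclideanSpace ℂ (Fin a ⊕ Fin b)) :
    vpoly a b (c • x) = c • vpoly a b x := by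
  simp only [vpoly, Finset.smul_sum]
  refine Finset.sum_congr rfl fun i _ => ?_
  have : (c • x) (Sum.inr i) = c * x (Sum.inr i) := rfl
  rw [this, C_mul, smul_eq_C_mul]; ring

lemma wpoly_natDegree_lt (ha : 1 ≤ a) (x : EuclideanSpace ℂ (Fin a ⊕ Fin b)) :
    (wpoly a b x).natDegree < a := by
  have h : (wpoly a b x).natDegree ≤ a - 1 := by
    rw [wpoly]
    exact natDegree_sum_le_of_forall_le Finset.univ _
      (fun i _ => le_trans (natDegree_C_mul_X_pow_le _ _)
        (by have := Nat.le_pred_of_lt i.2; omega))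
  omega

lemma vpoly_natDegree_lt (hb : 1 ≤ b) (x : EuclideanSpace ℂ (Fin a ⊕ Fin b)) :
    (vpoly a b x).natDegree < b := by
  have h : (vpoly a b x).natDegree ≤ b - 1 := by
    rw [vpoly]
    exact natDegree_sum_le_of_forall_le Finset.univ _
      (fun i _ => le_trans (natDegree_C_mul_X_pow_le _ _)
        (by have := Nat.le_pred_of_lt i.2; omega))
  omega

lemma wpoly_coeff (x : EuclideanSpace ℂ (Fin a ⊕ Fin b)) (i : Fin a) :
    (wpoly a b x).coeff i = x (Sum.inl i) := by
  rw [wpoly, finset_sum_coeff]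
  rw [Finset.sum_eq_single i]
  · rw [coeff_C_mul_X_pow]; simp
  · intro j _ hji
    rw [coeff_C_mul_X_pow]
    simp only [ite_eq_right_iff]
    intro h
    exact absurd (Fin.ext (by omega) : j = i) hji
  · intro h; exact absurd (Finset.mem_univ i) h

lemma vpoly_coeff (x : EuclideanSpace ℂ (Fin a ⊕ Fin b)) (i : Fin b) :
    (vpoly a b x).coeff i = x (Sum.inr i) := by
  rw [vpoly, finset_sum_coeff]
  rw [Finset.sum_eq_single i]
  · rw [coeff_C_mul_X_pow]; simp
  · intro j _ hji
    rw [coeff_C_mul_X_pow]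
    simp only [ite_eq_right_iff]
    intro h
    exact absurd (Fin.ext (by omega) : j = i) hji
  · intro h; exact absurd (Finset.mem_univ i) h

/-- the coefficient vector of a pair of polynomials -/
noncomputable def liftx (w v : ℂ[X]) : EuclideanSpace ℂ (Fin a ⊕ Fin b) :=
  WithLp.toLp 2 (Sum.elim (fun i : Fin a => w.coeff i) (fun i : Fin b => v.coeff i))

lemma wpoly_liftx (w v : ℂ[X]) (hw : w.natDegree < a) : wpoly a b (liftx a b w v) = w := by
  conv_rhs => rw [as_sum_range' w a hw]
  rw [wpoly, ← Fin.sum_univ_eq_sum_range (fun i => monomial i (w.coeff i)) a]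
  refine Finset.sum_congr rfl fun i _ => ?_
  rw [C_mul_X_pow_eq_monomial]
  rfl

lemma vpoly_liftx (w v : ℂ[X]) (hv : v.natDegree < b) : vpoly a b (liftx a b w v) = v := by
  conv_rhs => rw [as_sum_range' v b hv]
  rw [vpoly, ← Fin.sum_univ_eq_sum_range (fun i => monomial i (v.coeff i)) b]
  refine Finset.sum_congr rfl fun i _ => ?_
  rw [C_mul_X_pow_eq_monomial]
  rfl

lemma liftx_ne_zero (w v : ℂ[X]) (hw : w ≠ 0) (hwd : w.natDegree < a) :
    liftx a b w v ≠ 0 := by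
  intro h
  have h1 : (liftx a b w v) (Sum.inl ⟨w.natDegree, hwd⟩) = 0 := by rw [h]; rfl
  exact (leadingCoeff_ne_zero.2 hw) h1

lemma pnorm_wpoly_le (ha : 1 ≤ a) (x : EuclideanSpace ℂ (Fin a ⊕ Fin b)) :
    pnorm (wpoly a b x) ≤ ‖x‖ := by
  rw [EuclideanSpace.norm_eq, pnorm, pnormSq_eq_range _ a (wpoly_natDegree_lt a b ha x)]
  refine Real.sqrt_le_sqrt ?_
  rw [← Fin.sum_univ_eq_sum_range (fun i => ‖(wpoly a b x).coeff i‖ ^ 2) a,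
    Fintype.sum_sum_type]
  have h1 : ∑ i : Fin a, ‖(wpoly a b x).coeff i‖ ^ 2 = ∑ i : Fin a, ‖x (Sum.inl i)‖ ^ 2 :=
    Finset.sum_congr rfl fun i _ => by rw [wpoly_coeff]
  rw [h1]
  have h2 : 0 ≤ ∑ i : Fin b, ‖x (Sum.inr i)‖ ^ 2 :=
    Finset.sum_nonneg fun _ _ => sq_nonneg _
  linarith

lemma pnorm_vpoly_le (hb : 1 ≤ b) (x : EuclideanSpace ℂ (Fin a ⊕ Fin b)) :
    pnorm (vpoly a b x) ≤ ‖x‖ := by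
  rw [EuclideanSpace.norm_eq, pnorm, pnormSq_eq_range _ b (vpoly_natDegree_lt a b hb x)]
  refine Real.sqrt_le_sqrt ?_
  rw [← Fin.sum_univ_eq_sum_range (fun i => ‖(vpoly a b x).coeff i‖ ^ 2) b,
    Fintype.sum_sum_type]
  have h1 : ∑ i : Fin b, ‖(vpoly a b x).coeff i‖ ^ 2 = ∑ i : Fin b, ‖x (Sum.inr i)‖ ^ 2 :=
    Finset.sum_congr rfl fun i _ => by rw [vpoly_coeff]
  rw [h1]
  have h2 : 0 ≤ ∑ i : Fin a, ‖x (Sum.inl i)‖ ^ 2 :=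
    Finset.sum_nonneg fun _ _ => sq_nonneg _
  linarith

lemma toE_eq_zero {N : ℕ} {y : ℂ[X]} (h : y.natDegree < N) (h0 : toE N y = 0) : y = 0 := by
  ext i
  rcases lt_or_ge i N with hi | hi
  · have : toE N y ⟨i, hi⟩ = 0 := by rw [h0]; rfl
    simpa [toE] using this
  · simp [coeff_eq_zero_of_natDegree_lt (lt_of_lt_of_le h hi)]

/-- The Sylvester-type map as a linear map into Euclidean space -/
noncomputable def Lmap (N : ℕ) (p q : ℂ[X]) :
    EuclideanSpace ℂ (Fin a ⊕ Fin b) →ₗ[ℂ] EuclideanSpace ℂ (Fin N) where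
  toFun x := toE N (p * wpoly a b x - q * vpoly a b x)
  map_add' x y := by
    ext i
    simp only [toE, wpoly_add, vpoly_add, PiLp.add_apply, PiLp.toLp_apply]
    simp only [coeff_sub, coeff_add, mul_add]
    ring
  map_smul' c x := by
    ext i
    simp only [toE, wpoly_smul, vpoly_smul, RingHom.id_apply, PiLp.smul_apply, PiLp.toLp_apply]
    simp only [smul_eq_C_mul, coeff_sub, smul_eq_mul]
    have h1 : p * (C c * wpoly a b x) = C c * (p * wpoly a b x) := by ring
    have h2 : q * (C c * vpoly a b x) = C c * (q * vpoly a b x) := by ring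
    rw [h1, h2, coeff_C_mul, coeff_C_mul]; ring

end Sylvester

lemma toE_zero (N : ℕ) : toE N (0 : ℂ[X]) = 0 := by
  ext i; simp [toE]

lemma toE_sub (N : ℕ) (y z : ℂ[X]) : toE N (y - z) = toE N y - toE N z := by
  ext i
  simp only [toE, coeff_sub, PiLp.sub_apply, PiLp.toLp_apply]

lemma theta_pos (m n k : ℕ) (hkm : k < m) (hkn : k < n)
    (p q : ℂ[X]) (hmem : (p, q) ∈ Pmnk m n k) : 0 < theta m n (k + 1) p q := by
  classical
  obtain ⟨⟨hdp, hdq⟩, hgcd⟩ := hmem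
  simp only at hdp hdq hgcd
  have hp0 : p ≠ 0 := ne_zero_of_degree_coe hdp
  have hq0 : q ≠ 0 := ne_zero_of_degree_coe hdq
  have hpm : p.natDegree = m := natDegree_eq_of_degree_eq_some hdp
  have hqn : q.natDegree = n := natDegree_eq_of_degree_eq_some hdq
  set a := n - k with hadef
  set b := m - k with hbdef
  have ha : 1 ≤ a := by omega
  have hb : 1 ≤ b := by omega
  set N := m + n + 1 with hNdef
  set E := EuclideanSpace ℂ (Fin a ⊕ Fin b) with hEdef
  set L := Lmap a b N p q with hLdef
  -- injectivity
  have hLinj : ∀ x : E, L x = 0 → x = 0 := by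
    intro x hx
    have hy : p * wpoly a b x - q * vpoly a b x = 0 := by
      refine toE_eq_zero (N := N) ?_ hx
      calc (p * wpoly a b x - q * vpoly a b x).natDegree
          ≤ max (p * wpoly a b x).natDegree (q * vpoly a b x).natDegree := natDegree_sub_le _ _
        _ < N := by
            have h1 : (p * wpoly a b x).natDegree ≤ m + (a - 1) := le_trans (natDegree_mul_le)
              (by have := wpoly_natDegree_lt a b ha x; omega)
            have h2 : (q * vpoly a b x).natDegree ≤ n + (b - 1) := le_trans (natDegree_mul_le)
              (by have := vpoly_natDegree_lt a b hb x; omega)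
            have : a - 1 ≤ n := by omega
            have : b - 1 ≤ m := by omega
            simp only [max_lt_iff]
            omega
    have heq : p * wpoly a b x = q * vpoly a b x := by linear_combination hy
    rcases eq_or_ne (wpoly a b x) 0 with hw0 | hw0
    · have hv0 : vpoly a b x = 0 := by
        rw [hw0, mul_zero] at heq
        exact (mul_eq_zero.1 heq.symm).resolve_left hq0
      ext i
      rcases i with i | i
      · have := wpoly_coeff a b x i
        rw [hw0, coeff_zero] at this
        exact this.symm
      · have := vpoly_coeff a b x i
        rw [hv0, coeff_zero] at this
        exact this.symm
    · exfalso
      have hge := gcdDeg_ge_aux p q (wpoly a b x) (vpoly a b x) hp0 hq0 heq hw0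
      have hwd : (wpoly a b x).natDegree < a := wpoly_natDegree_lt a b ha x
      omega
  -- minimum on the sphere
  have hLcont : Continuous L := L.continuous_of_finiteDimensional
  haveI : Nontrivial E := by
    refine ⟨(WithLp.toLp 2 fun _ => 1 : E), 0, fun h => ?_⟩
    have := congrArg (fun x : E => x (Sum.inl ⟨0, ha⟩)) h
    exact one_ne_zero (by exact this)
  have hsph : (Metric.sphere (0 : E) 1).Nonempty := NormedSpace.sphere_nonempty.mpr zero_le_one
  obtain ⟨x₀, hx₀mem, hx₀min⟩ := (isCompact_sphere (0 : E) 1).exists_isMinOn hsph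
    (hLcont.norm.continuousOn)
  rw [isMinOn_iff] at hx₀min
  set c := ‖L x₀‖ with hcdef
  have hc0 : 0 < c := by
    rw [hcdef, norm_pos_iff]
    intro h
    have hx₀0 : x₀ ≠ 0 := by
      intro h0
      rw [Metric.mem_sphere, dist_zero_right, h0, norm_zero] at hx₀mem
      norm_num at hx₀mem
    exact hx₀0 (hLinj x₀ h)
  -- lower bound for every point of the manifold
  have hlb : ∀ r s : ℂ[X], (r, s) ∈ Pmnk m n (k + 1) →
      c ≤ 2 * (N : ℝ) ^ 2 * pairNorm (p - r) (q - s) := by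
    intro r s hrsmem
    obtain ⟨⟨hdr, hds⟩, hgcdrs⟩ := hrsmem
    simp only at hdr hds hgcdrs
    have hr0 : r ≠ 0 := ne_zero_of_degree_coe hdr
    have hs0 : s ≠ 0 := ne_zero_of_degree_coe hds
    have hrm : r.natDegree = m := natDegree_eq_of_degree_eq_some hdr
    have hsn : s.natDegree = n := natDegree_eq_of_degree_eq_some hds
    obtain ⟨w, v, hwv, hw0, hv0, hwdeg, hvdeg⟩ := witness_of_gcdDeg r s hr0 hs0
    have hwd : w.natDegree < a := by rw [hwdeg, hsn, hgcdrs]; omega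
    have hvd : v.natDegree < b := by rw [hvdeg, hrm, hgcdrs]; omega
    set x := liftx a b w v with hxdef
    have hx0 : x ≠ 0 := liftx_ne_zero a b w v hw0 hwd
    have hwx : wpoly a b x = w := wpoly_liftx a b w v hwd
    have hvx : vpoly a b x = v := vpoly_liftx a b w v hvd
    have hLrsx : Lmap a b N r s x = 0 := by
      show toE N (r * wpoly a b x - s * vpoly a b x) = 0
      rw [hwx, hvx, hwv, sub_self, toE_zero]
    set xh : E := (‖x‖⁻¹ : ℂ) • x with hxhdef
    have hxhnorm : ‖xh‖ = 1 := norm_smul_inv_norm (𝕜 := ℂ) hx0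
    have hxhsph : xh ∈ Metric.sphere (0 : E) 1 := by
      rw [Metric.mem_sphere, dist_zero_right]; exact hxhnorm
    have hLrsxh : Lmap a b N r s xh = 0 := by
      rw [hxhdef, map_smul, hLrsx, smul_zero]
    have hkey : L xh - Lmap a b N r s xh =
        toE N ((p - r) * wpoly a b xh - (q - s) * vpoly a b xh) := by
      show toE N (p * wpoly a b xh - q * vpoly a b xh) -
          toE N (r * wpoly a b xh - s * vpoly a b xh) = _
      rw [← toE_sub]
      congr 1
      ring
    have hd1 : ((p - r) * wpoly a b xh).natDegree < N := by
      refine lt_of_le_of_lt natDegree_mul_le ?_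
      have h1 : (p - r).natDegree ≤ m := le_trans (natDegree_sub_le _ _) (by omega)
      have h2 := wpoly_natDegree_lt a b ha xh
      omega
    have hd2 : ((q - s) * vpoly a b xh).natDegree < N := by
      refine lt_of_le_of_lt natDegree_mul_le ?_
      have h1 : (q - s).natDegree ≤ n := le_trans (natDegree_sub_le _ _) (by omega)
      have h2 := vpoly_natDegree_lt a b hb xh
      omega
    have hest : ‖L xh‖ ≤ 2 * (N : ℝ) ^ 2 * pairNorm (p - r) (q - s) := by
      have e0 : ‖L xh‖ = ‖L xh - Lmap a b N r s xh‖ := by rw [hLrsxh, sub_zero]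
      rw [e0, hkey, toE_sub]
      calc ‖toE N ((p - r) * wpoly a b xh) - toE N ((q - s) * vpoly a b xh)‖
          ≤ ‖toE N ((p - r) * wpoly a b xh)‖ + ‖toE N ((q - s) * vpoly a b xh)‖ :=
            norm_sub_le _ _
        _ = pnorm ((p - r) * wpoly a b xh) + pnorm ((q - s) * vpoly a b xh) := by
            rw [← pnorm_eq_toE N _ hd1, ← pnorm_eq_toE N _ hd2]
        _ ≤ (N : ℝ) ^ 2 * (pnorm (p - r) * pnorm (wpoly a b xh)) +
            (N : ℝ) ^ 2 * (pnorm (q - s) * pnorm (vpoly a b xh)) :=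
            add_le_add (pnorm_mul_le_s19 _ _ N hd1) (pnorm_mul_le_s19 _ _ N hd2)
        _ ≤ (N : ℝ) ^ 2 * (pairNorm (p - r) (q - s) * 1) +
            (N : ℝ) ^ 2 * (pairNorm (p - r) (q - s) * 1) := by
            have hw1 : pnorm (wpoly a b xh) ≤ 1 := by
              have := pnorm_wpoly_le a b ha xh; rw [hxhnorm] at this; exact this
            have hv1 : pnorm (vpoly a b xh) ≤ 1 := by
              have := pnorm_vpoly_le a b hb xh; rw [hxhnorm] at this; exact this
            have hN2 : (0:ℝ) ≤ (N : ℝ) ^ 2 := sq_nonneg _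
            refine add_le_add ?_ ?_
            · refine mul_le_mul_of_nonneg_left ?_ hN2
              exact mul_le_mul (pnorm_le_pairNorm_left _ _) hw1 (pnorm_nonneg _)
                (pairNorm_nonneg _ _)
            · refine mul_le_mul_of_nonneg_left ?_ hN2
              exact mul_le_mul (pnorm_le_pairNorm_right _ _) hv1 (pnorm_nonneg _)
                (pairNorm_nonneg _ _)
        _ = 2 * (N : ℝ) ^ 2 * pairNorm (p - r) (q - s) := by ring
    exact le_trans (hx₀min xh hxhsph) hest
  -- conclude
  obtain ⟨r0, s0, hr0mem⟩ := Pmnk_nonempty m n (k + 1) (by omega) (by omega)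
  have hN2pos : (0:ℝ) < 2 * (N : ℝ) ^ 2 := by positivity
  have hδ : 0 < c / (2 * (N : ℝ) ^ 2) := div_pos hc0 hN2pos
  refine lt_of_lt_of_le hδ ?_
  refine le_csInf ⟨_, ⟨(r0, s0), hr0mem, rfl⟩⟩ ?_
  rintro v ⟨⟨r, s⟩, hrs, rfl⟩
  rw [div_le_iff₀ hN2pos]
  calc c ≤ 2 * (N : ℝ) ^ 2 * pairNorm (p - r) (q - s) := hlb r s hrs
    _ = pairNorm (p - r) (q - s) * (2 * (N : ℝ) ^ 2) := by ring


/-- For (p,q) ∈ 𝒫ᵏ_{m,n}: θ_j(p,q) = 0 for j ≤ k, the distances θ_j are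
nondecreasing in j, and θ_k(p,q) < θ_{k+1}(p,q) strictly when k < min(m,n). -/
theorem theta_chain (m n k : ℕ) (hm : 1 ≤ m) (hn : 1 ≤ n) (hk : k ≤ min m n)
    (p q : ℂ[X]) (hmem : (p, q) ∈ Pmnk m n k) :
    (∀ j : ℕ, j ≤ k → theta m n j p q = 0) ∧
    (∀ j : ℕ, j < min m n → theta m n j p q ≤ theta m n (j + 1) p q) ∧
    (k < min m n → theta m n k p q < theta m n (k + 1) p q) := by
  refine ⟨fun j hj => theta_eq_zero_of_le m n k j p q hmem hj,
    fun j hj => theta_mono m n k p q j hj, fun hklt => ?_⟩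
  rw [theta_eq_zero_of_le m n k k p q hmem le_rfl]
  exact theta_pos m n k (by omega) (by omega) p q hmem
end
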